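/- Let K and L be finite simplicial complexes. If the face posets X(K) and X(L) are homotopy equivalent as finite posets, then K and L have the same strong homotopy type. -/

import Mathlib

/- Theory of strong homotopy types of finite simplicial complexes
   (Barmak–Minian), basic definitions. -/

open Classical

namespace StrongHomotopy

/-- A finite abstract simplicial complex with vertices from the ambient type `V`:
a finite family of nonempty finite subsets of `V`, closed under nonempty subsets.
(All singletons of vertices actually used are faces, by downward closure.) -/
structure Cplx (V : Type) where
  faces : Finset (Finset V)
  nonempty_of_mem : ∀ ⦃σ : Finset V⦄, σ ∈ faces → σ.Nonempty
  down_closed : ∀ ⦃σ τ : Finset V⦄, σ ∈ faces → τ ⊆ σ → τ.Nonempty → τ ∈ faces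

variable {V W : Type}

/-- `v` is a vertex of `K`. -/
def IsVertex (K : Cplx V) (v : V) : Prop := {v} ∈ K.faces

noncomputable section

/-- The set of faces of the link of `v` in `K`. -/
def link (K : Cplx V) (v : V) : Finset (Finset V) :=
  K.faces.filter fun σ => v ∉ σ ∧ insert v σ ∈ K.faces

/-- A family of faces is a simplicial cone with apex `a`. -/
def IsConeWithApex (F : Finset (Finset V)) (a : V) : Prop :=
  {a} ∈ F ∧ ∀ σ ∈ F, insert a σ ∈ F

/-- A family of faces is a simplicial cone. -/
def IsCone (F : Finset (Finset V)) : Prop := ∃ a, IsConeWithApex F a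

/-- `v` is dominated by `v'` in `K`: the link of `v` is a cone with apex `v'`. -/
def DominatedBy (K : Cplx V) (v v' : V) : Prop := IsConeWithApex (link K v) v'

/-- `v` is a dominated vertex of `K`: its link is a simplicial cone. -/
def Dominated (K : Cplx V) (v : V) : Prop := IsCone (link K v)

/-- Deletion `K ∖ v`: the full subcomplex spanned by the vertices other than `v`. -/
def delete (K : Cplx V) (v : V) : Cplx V where
  faces := K.faces.filter fun σ => v ∉ σ
  nonempty_of_mem := fun σ h => K.nonempty_of_mem (Finset.mem_filter.mp h).1
  down_closed := by
    intro σ τ hσ hsub hne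
    rw [Finset.mem_filter] at hσ ⊢
    exact ⟨K.down_closed hσ.1 hsub hne, fun hv => hσ.2 (hsub hv)⟩

/-- The link of a vertex, as a simplicial complex. -/
def linkCplx (K : Cplx V) (v : V) : Cplx V where
  faces := link K v
  nonempty_of_mem := fun σ h => K.nonempty_of_mem (Finset.mem_filter.mp h).1
  down_closed := by
    intro σ τ hσ hsub hne
    simp only [link, Finset.mem_filter] at hσ ⊢
    refine ⟨K.down_closed hσ.1 hsub hne, fun hv => hσ.2.1 (hsub hv), ?_⟩
    exact K.down_closed hσ.2.2 (Finset.insert_subset_insert v hsub)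
      ⟨v, Finset.mem_insert_self v τ⟩

/-- Elementary strong collapse: deletion of a dominated vertex. -/
def ElemStrongCollapse (K L : Cplx V) : Prop := ∃ v, Dominated K v ∧ L = delete K v

/-- `K` strong collapses to `L` (a sequence of elementary strong collapses). -/
def StrongCollapses : Cplx V → Cplx V → Prop := Relation.ReflTransGen ElemStrongCollapse

/-- The complex with a single vertex `v`. -/
def pt (v : V) : Cplx V where
  faces := {{v}}
  nonempty_of_mem := by
    intro σ h
    rw [Finset.mem_singleton] at h
    subst h
    exact ⟨v, Finset.mem_singleton_self v⟩
  down_closed := by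
    intro σ τ hσ hsub hne
    rw [Finset.mem_singleton] at hσ ⊢
    subst hσ
    rcases Finset.subset_singleton_iff.mp hsub with h | h
    · exact absurd h (Finset.nonempty_iff_ne_empty.mp hne)
    · exact h

/-- `K` is strong collapsible: it strong collapses to a single vertex. -/
def StrongCollapsible (K : Cplx V) : Prop := ∃ v, StrongCollapses K (pt v)

/-- A minimal complex: no dominated vertices. -/
def MinimalCplx (K : Cplx V) : Prop := ∀ v, ¬ Dominated K v

/-- A vertex map is simplicial if it sends faces to faces. -/
def IsSimplicial (K : Cplx V) (L : Cplx W) (f : V → W) : Prop :=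
  ∀ σ ∈ K.faces, σ.image f ∈ L.faces

/-- Two vertex maps are contiguous. -/
def Contiguous (K : Cplx V) (L : Cplx W) (f g : V → W) : Prop :=
  ∀ σ ∈ K.faces, σ.image f ∪ σ.image g ∈ L.faces

/-- `f` and `g` lie in the same contiguity class: they are joined by
a finite chain of (pairwise contiguous) maps. -/
def ContigClass (K : Cplx V) (L : Cplx W) : (V → W) → (V → W) → Prop :=
  Relation.ReflTransGen (Contiguous K L)

/-- A strong equivalence of simplicial complexes. -/
def StrongEquiv (K : Cplx V) (L : Cplx W) (f : V → W) : Prop :=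
  IsSimplicial K L f ∧ ∃ g : W → V, IsSimplicial L K g ∧
    ContigClass K K (g ∘ f) id ∧ ContigClass L L (f ∘ g) id

/-- `f` is a simplicial isomorphism from `K` to `L`: a simplicial map,
injective on vertices, inducing a bijection on faces. -/
def IsIsoMap (K : Cplx V) (L : Cplx W) (f : V → W) : Prop :=
  IsSimplicial K L f ∧ Set.InjOn f {v | IsVertex K v} ∧
    K.faces.image (fun σ => σ.image f) = L.faces

/-- `K` and `L` are simplicially isomorphic. -/
def Isomorphic (K : Cplx V) (L : Cplx W) : Prop := ∃ f, IsIsoMap K L f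

/-- `L` is a subcomplex of `K`. -/
def Subcplx (L K : Cplx V) : Prop := L.faces ⊆ K.faces

/-- `L` is a full subcomplex of `K`. -/
def IsFullSub (L K : Cplx V) : Prop :=
  L.faces ⊆ K.faces ∧ ∀ σ ∈ K.faces, (∀ v ∈ σ, IsVertex L v) → σ ∈ L.faces

/-- `K₀` is a core of `K`: a minimal complex to which `K` strong collapses. -/
def IsCore (K K₀ : Cplx V) : Prop := MinimalCplx K₀ ∧ StrongCollapses K K₀

/-- Same strong homotopy type: joined by a finite sequence of strong collapses,
strong expansions and simplicial isomorphisms. (In the abstract setting, where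
new vertices may be created freely, isomorphisms are generated by collapses and
expansions; over a fixed ambient vertex type they must be added as moves.) -/
def SameSHT (K L : Cplx V) : Prop :=
  Relation.ReflTransGen
    (fun A B => ElemStrongCollapse A B ∨ ElemStrongCollapse B A ∨ Isomorphic A B) K L

/-- `K` is vertex-homogeneous: its automorphism group acts transitively on vertices. -/
def VertexHomog (K : Cplx V) : Prop :=
  ∀ v w, IsVertex K v → IsVertex K w → ∃ φ : V → V, IsIsoMap K K φ ∧ φ v = w

/-! ### The nerve -/

/-- The maximal faces of `K`. -/
def maxFaces (K : Cplx V) : Finset (Finset V) :=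
  K.faces.filter fun σ => ∀ τ ∈ K.faces, σ ⊆ τ → σ = τ

/-- The nerve of `K`: vertices are the maximal simplices of `K`; a nonempty set
of maximal simplices is a face iff the simplices have a common vertex. -/
def nerve (K : Cplx V) : Cplx (Finset V) where
  faces := (maxFaces K).powerset.filter fun S => S.Nonempty ∧ ∃ v, ∀ σ ∈ S, v ∈ σ
  nonempty_of_mem := fun S h => (Finset.mem_filter.mp h).2.1
  down_closed := by
    intro S T hS hsub hne
    rw [Finset.mem_filter, Finset.mem_powerset] at hS ⊢
    obtain ⟨hpow, -, v, hv⟩ := hS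
    exact ⟨hsub.trans hpow, hne, v, fun σ hσ => hv σ (hsub hσ)⟩

/-- Iterated ambient vertex types for iterated nerves. -/
def iterV (V : Type) : ℕ → Type := fun n => Nat.rec V (fun _ T => Finset T) n

/-- The iterated nerve `Nⁿ(K)` (with `N⁰(K) = K`). -/
def iterNerve (K : Cplx V) : (n : ℕ) → Cplx (iterV V n)
  | 0 => K
  | n + 1 => nerve (iterNerve K n)

/-- A complex consists of a single vertex. -/
def IsPoint (K : Cplx V) : Prop := ∃ v, K.faces = {{v}}

/-! ### Joins -/

/-- The left part of a set of vertices of `V ⊕ W`. -/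
def lefts (ρ : Finset (V ⊕ W)) : Finset V :=
  ρ.preimage Sum.inl Sum.inl_injective.injOn

/-- The right part of a set of vertices of `V ⊕ W`. -/
def rights (ρ : Finset (V ⊕ W)) : Finset W :=
  ρ.preimage Sum.inr Sum.inr_injective.injOn

lemma lefts_union_rights (ρ : Finset (V ⊕ W)) :
    (lefts ρ).image Sum.inl ∪ (rights ρ).image Sum.inr = ρ := by
  ext x
  cases x with
  | inl v => simp [lefts, rights]
  | inr w => simp [lefts, rights]

lemma lefts_eq (σ : Finset V) (τ : Finset W) :
    lefts (σ.image Sum.inl ∪ τ.image Sum.inr) = σ := by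
  ext v; simp [lefts]

lemma rights_eq (σ : Finset V) (τ : Finset W) :
    rights (σ.image Sum.inl ∪ τ.image Sum.inr) = τ := by
  ext w; simp [rights]

/-- The faces of the join `K * L`. -/
def joinFaces (K : Cplx V) (L : Cplx W) : Finset (Finset (V ⊕ W)) :=
  (((insert ∅ K.faces) ×ˢ (insert ∅ L.faces)).image
    (fun p => p.1.image Sum.inl ∪ p.2.image Sum.inr)).erase ∅

lemma mem_joinFaces {K : Cplx V} {L : Cplx W} {ρ : Finset (V ⊕ W)} :
    ρ ∈ joinFaces K L ↔
      ρ.Nonempty ∧ lefts ρ ∈ insert ∅ K.faces ∧ rights ρ ∈ insert ∅ L.faces := by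
  unfold joinFaces
  constructor
  · intro h
    have hne : ρ ≠ ∅ := Finset.ne_of_mem_erase h
    have h' := Finset.mem_of_mem_erase h
    rw [Finset.mem_image] at h'
    obtain ⟨p, hp, hρ⟩ := h'
    rw [Finset.mem_product] at hp
    subst hρ
    rw [lefts_eq, rights_eq]
    exact ⟨Finset.nonempty_iff_ne_empty.mpr hne, hp.1, hp.2⟩
  · rintro ⟨hne, hl, hr⟩
    apply Finset.mem_erase.mpr
    refine ⟨Finset.nonempty_iff_ne_empty.mp hne, ?_⟩
    rw [Finset.mem_image]
    exact ⟨(lefts ρ, rights ρ), Finset.mem_product.mpr ⟨hl, hr⟩, lefts_union_rights ρ⟩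

/-- The simplicial join `K * L` of complexes with disjoint vertex sets
(realized on the disjoint sum of the ambient types). -/
def join (K : Cplx V) (L : Cplx W) : Cplx (V ⊕ W) where
  faces := joinFaces K L
  nonempty_of_mem := fun ρ h => (mem_joinFaces.mp h).1
  down_closed := by
    intro ρ ρ' hρ hsub hne
    obtain ⟨-, hl, hr⟩ := mem_joinFaces.mp hρ
    apply mem_joinFaces.mpr
    refine ⟨hne, ?_, ?_⟩
    · rcases Finset.eq_empty_or_nonempty (lefts ρ') with h0 | h1
      · rw [h0]; exact Finset.mem_insert_self _ _
      · have hsubl : lefts ρ' ⊆ lefts ρ := by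
          intro v hv
          simp only [lefts, Finset.mem_preimage] at hv ⊢
          exact hsub hv
        have hKf : lefts ρ ∈ K.faces := by
          rcases Finset.mem_insert.mp hl with h | h
          · obtain ⟨v, hv⟩ := h1
            exact absurd (hsubl hv) (by simp [h])
          · exact h
        exact Finset.mem_insert.mpr (Or.inr (K.down_closed hKf hsubl h1))
    · rcases Finset.eq_empty_or_nonempty (rights ρ') with h0 | h1
      · rw [h0]; exact Finset.mem_insert_self _ _
      · have hsubr : rights ρ' ⊆ rights ρ := by
          intro w hw
          simp only [rights, Finset.mem_preimage] at hw ⊢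
          exact hsub hw
        have hLf : rights ρ ∈ L.faces := by
          rcases Finset.mem_insert.mp hr with h | h
          · obtain ⟨w, hw⟩ := h1
            exact absurd (hsubr hw) (by simp [h])
          · exact h
        exact Finset.mem_insert.mpr (Or.inr (L.down_closed hLf hsubr h1))

/-! ### Finite posets (finite T₀-spaces) -/

variable {P : Type} [PartialOrder P]

/-- `x` is a beat point of the finite poset `X`: the points of `X` strictly below
`x` have a maximum, or the points of `X` strictly above `x` have a minimum. -/
def BeatPoint (X : Finset P) (x : P) : Prop :=
  x ∈ X ∧ ((∃ y ∈ X, y < x ∧ ∀ z ∈ X, z < x → z ≤ y) ∨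
    (∃ y ∈ X, x < y ∧ ∀ z ∈ X, x < z → y ≤ z))

/-- Elementary strong collapse of finite posets: removal of a beat point. -/
def ElemPosetStrongCollapse (X Y : Finset P) : Prop :=
  ∃ x, BeatPoint X x ∧ Y = X.erase x

/-- Strong collapse of finite posets: successive removal of beat points. -/
def PosetStrongCollapses : Finset P → Finset P → Prop :=
  Relation.ReflTransGen ElemPosetStrongCollapse

/-- A finite poset is contractible iff it strong collapses to a point (Stong). -/
def PosetContractible (X : Finset P) : Prop := ∃ x, PosetStrongCollapses X {x}

/-- The link `Ĉ_x` of `x` in `X`: the points of `X` comparable with `x` and distinct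
from it. -/
def posetLink (X : Finset P) (x : P) : Finset P :=
  X.filter fun y => y < x ∨ x < y

/-- `x` is a weak point of `X`: its link is contractible. -/
def WeakPoint (X : Finset P) (x : P) : Prop :=
  x ∈ X ∧ PosetContractible (posetLink X x)

/-- Collapse of finite posets: successive removal of weak points. -/
def PosetCollapses : Finset P → Finset P → Prop :=
  Relation.ReflTransGen (fun X Y => ∃ x, WeakPoint X x ∧ Y = X.erase x)

/-- A finite poset is collapsible if it collapses to a point. -/
def PosetCollapsible (X : Finset P) : Prop := ∃ x, PosetCollapses X {x}

/-- The order complex of a finite poset: faces are the nonempty chains. -/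
def orderCplx (X : Finset P) : Cplx P where
  faces := X.powerset.filter fun σ => σ.Nonempty ∧ IsChain (· ≤ ·) (σ : Set P)
  nonempty_of_mem := fun σ h => (Finset.mem_filter.mp h).2.1
  down_closed := by
    intro σ τ hσ hsub hne
    rw [Finset.mem_filter, Finset.mem_powerset] at hσ ⊢
    exact ⟨hsub.trans hσ.1, hne, hσ.2.2.mono (Finset.coe_subset.mpr hsub)⟩

/-- The barycentric subdivision of a complex: the order complex of its poset of
faces (the face poset, ordered by inclusion). -/
def sd (K : Cplx V) : Cplx (Finset V) := orderCplx K.faces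

/-- Homotopy of order-preserving maps between finite posets: being joined by a
fence in the pointwise order. -/
def PosetHomotopic {X Y : Type} [Preorder X] [Preorder Y] (f g : X →o Y) : Prop :=
  Relation.ReflTransGen (fun p q : X →o Y => p ≤ q ∨ q ≤ p) f g

/-- Homotopy equivalence of finite posets. -/
def PosetHomotopyEquiv (X Y : Type) [Preorder X] [Preorder Y] : Prop :=
  ∃ (f : X →o Y) (g : Y →o X),
    PosetHomotopic (g.comp f) OrderHom.id ∧ PosetHomotopic (f.comp g) OrderHom.id

/-! ### Classical collapses and n-collapses -/

/-- Elementary (classical) simplicial collapse: removal of a free face `σ`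
together with the unique face `τ` properly containing it. -/
def ElemCollapse (K L : Cplx V) : Prop :=
  ∃ σ τ : Finset V, σ ∈ K.faces ∧ τ ∈ K.faces ∧ σ ⊂ τ ∧
    (∀ ρ ∈ K.faces, σ ⊂ ρ → ρ = τ) ∧ L.faces = K.faces \ {σ, τ}

/-- Classical simplicial collapse. -/
def Collapses : Cplx V → Cplx V → Prop := Relation.ReflTransGen ElemCollapse

/-- A complex is collapsible if it collapses to a point. -/
def Collapsible (K : Cplx V) : Prop := ∃ v, Collapses K (pt v)

/-- `n`-collapses: a `0`-collapse is a strong collapse; an `(n+1)`-collapse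
successively deletes vertices whose links are `n`-collapsible. -/
def NCollapses : ℕ → Cplx V → Cplx V → Prop
  | 0 => StrongCollapses
  | n + 1 => Relation.ReflTransGen
      (fun K L => ∃ v, (∃ w, NCollapses n (linkCplx K v) (pt w)) ∧ L = delete K v)

/-- `K` is `n`-collapsible: it `n`-collapses to a single vertex. -/
def NCollapsible (n : ℕ) (K : Cplx V) : Prop := ∃ v, NCollapses n K (pt v)

/-- `K` is non-evasive: it is `n`-collapsible for some `n`. -/
def NonEvasive (K : Cplx V) : Prop := ∃ n, NCollapsible n K

end

/-! ### Auxiliary development for Statement 15 -/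

section Proof15

variable {K L M J : Cplx V}

lemma vertex_of_mem {σ : Finset V} (hσ : σ ∈ K.faces) {v : V} (hv : v ∈ σ) :
    {v} ∈ K.faces :=
  K.down_closed hσ (Finset.singleton_subset_iff.mpr hv) (Finset.singleton_nonempty v)

lemma mem_link {v : V} {σ : Finset V} :
    σ ∈ link K v ↔ σ ∈ K.faces ∧ v ∉ σ ∧ insert v σ ∈ K.faces := by
  unfold link
  exact Finset.mem_filter

lemma faceLe {S : Finset (Finset V)} {x y : {σ : Finset V // σ ∈ S}} (h : x ≤ y) :
    x.val ⊆ y.val := h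

/-- `φ` is a vertex-choice for the order-preserving map `f` between face posets. -/
def IsChoice (K L : Cplx V)
    (f : {σ : Finset V // σ ∈ K.faces} →o {τ : Finset V // τ ∈ L.faces})
    (φ : V → V) : Prop :=
  ∀ (v : V) (h : {v} ∈ K.faces), φ v ∈ (f ⟨{v}, h⟩).val

lemma exists_choice [Nonempty V]
    (f : {σ : Finset V // σ ∈ K.faces} →o {τ : Finset V // τ ∈ L.faces}) :
    ∃ φ : V → V, IsChoice K L f φ := by
  refine ⟨fun v => if h : {v} ∈ K.faces then
      (L.nonempty_of_mem (f ⟨{v}, h⟩).prop).choose else Classical.arbitrary V, ?_⟩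
  intro v h
  simp only [dif_pos h]
  exact (L.nonempty_of_mem (f ⟨{v}, h⟩).prop).choose_spec

lemma IsChoice.image_subset
    {f : {σ : Finset V // σ ∈ K.faces} →o {τ : Finset V // τ ∈ L.faces}}
    {φ : V → V} (hφ : IsChoice K L f φ) {σ : Finset V} (hσ : σ ∈ K.faces) :
    σ.image φ ⊆ (f ⟨σ, hσ⟩).val := by
  intro x hx
  obtain ⟨v, hv, rfl⟩ := Finset.mem_image.mp hx
  have h1 : {v} ∈ K.faces := vertex_of_mem hσ hv
  have h2 : (⟨{v}, h1⟩ : {σ : Finset V // σ ∈ K.faces}) ≤ ⟨σ, hσ⟩ :=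
    Finset.singleton_subset_iff.mpr hv
  exact faceLe (f.monotone h2) (hφ v h1)

lemma IsChoice.isSimplicial
    {f : {σ : Finset V // σ ∈ K.faces} →o {τ : Finset V // τ ∈ L.faces}}
    {φ : V → V} (hφ : IsChoice K L f φ) : IsSimplicial K L φ := by
  intro σ hσ
  exact L.down_closed (f ⟨σ, hσ⟩).prop (hφ.image_subset hσ)
    ((K.nonempty_of_mem hσ).image φ)

lemma contiguous_of_rel
    {f g : {σ : Finset V // σ ∈ K.faces} →o {τ : Finset V // τ ∈ L.faces}}
    (hr : f ≤ g ∨ g ≤ f) {φ ψ : V → V}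
    (hφ : IsChoice K L f φ) (hψ : IsChoice K L g ψ) : Contiguous K L φ ψ := by
  intro σ hσ
  obtain ⟨x, hx⟩ := K.nonempty_of_mem hσ
  have hne : (σ.image φ ∪ σ.image ψ).Nonempty :=
    ⟨φ x, Finset.mem_union_left _ (Finset.mem_image_of_mem φ hx)⟩
  rcases hr with hr | hr
  · refine L.down_closed (g ⟨σ, hσ⟩).prop (Finset.union_subset ?_ (hψ.image_subset hσ)) hne
    exact (hφ.image_subset hσ).trans (faceLe (hr ⟨σ, hσ⟩))
  · refine L.down_closed (f ⟨σ, hσ⟩).prop (Finset.union_subset (hφ.image_subset hσ) ?_) hne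
    exact (hψ.image_subset hσ).trans (faceLe (hr ⟨σ, hσ⟩))

lemma contigClass_of_homotopic [Nonempty V]
    {f g : {σ : Finset V // σ ∈ K.faces} →o {τ : Finset V // τ ∈ L.faces}}
    (hfg : PosetHomotopic f g) :
    ∀ {φ ψ : V → V}, IsChoice K L f φ → IsChoice K L g ψ → ContigClass K L φ ψ := by
  induction hfg with
  | refl =>
    intro φ ψ hφ hψ
    exact Relation.ReflTransGen.single (contiguous_of_rel (Or.inl le_rfl) hφ hψ)
  | tail hab hstep ih =>
    intro φ ψ hφ hψ
    obtain ⟨χ, hχ⟩ := exists_choice (K := K) (L := L) _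
    exact (ih hφ hχ).tail (contiguous_of_rel hstep hχ hψ)

lemma IsChoice.comp
    {f : {σ : Finset V // σ ∈ K.faces} →o {τ : Finset V // τ ∈ L.faces}}
    {g : {σ : Finset V // σ ∈ L.faces} →o {τ : Finset V // τ ∈ M.faces}}
    {φ ψ : V → V} (hφ : IsChoice K L f φ) (hψ : IsChoice L M g ψ) :
    IsChoice K M (g.comp f) (ψ ∘ φ) := by
  intro v h
  have h1 : φ v ∈ (f ⟨{v}, h⟩).val := hφ v h
  have h2 : {φ v} ∈ L.faces := vertex_of_mem (f ⟨{v}, h⟩).prop h1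
  have h3 : (⟨{φ v}, h2⟩ : {σ : Finset V // σ ∈ L.faces}) ≤ f ⟨{v}, h⟩ :=
    Finset.singleton_subset_iff.mpr h1
  exact faceLe (g.monotone h3) (hψ (φ v) h2)

lemma isChoice_id : IsChoice K K OrderHom.id id :=
  fun v _ => Finset.mem_singleton_self v

/-! #### Domination from contiguity to the identity -/

lemma dominated_of_union {h : V → V}
    (hu : ∀ σ ∈ K.faces, σ ∪ σ.image h ∈ K.faces)
    {v : V} (hv : IsVertex K v) (hne : h v ≠ v) : Dominated K v := by
  refine ⟨h v, ?_, ?_⟩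
  · have hp : {v} ∪ ({v} : Finset V).image h ∈ K.faces := hu {v} hv
    rw [Finset.image_singleton] at hp
    refine mem_link.mpr ⟨?_, ?_, ?_⟩
    · exact K.down_closed hp Finset.subset_union_right (Finset.singleton_nonempty _)
    · intro hx
      exact hne ((Finset.mem_singleton.mp hx).symm)
    · rwa [Finset.insert_eq]
  · intro μ hμ
    obtain ⟨hμK, hvμ, hins⟩ := mem_link.mp hμ
    have hT := hu (insert v μ) hins
    have hsub : insert v (insert (h v) μ) ⊆ insert v μ ∪ (insert v μ).image h := by
      intro x hx
      rcases Finset.mem_insert.mp hx with rfl | hx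
      · exact Finset.mem_union_left _ (Finset.mem_insert_self _ _)
      rcases Finset.mem_insert.mp hx with rfl | hx
      · exact Finset.mem_union_right _ (Finset.mem_image_of_mem h (Finset.mem_insert_self v μ))
      · exact Finset.mem_union_left _ (Finset.mem_insert_of_mem hx)
    have hS : insert v (insert (h v) μ) ∈ K.faces :=
      K.down_closed hT hsub ⟨v, Finset.mem_insert_self _ _⟩
    refine mem_link.mpr ⟨?_, ?_, hS⟩
    · exact K.down_closed hS (Finset.subset_insert _ _) ⟨h v, Finset.mem_insert_self _ _⟩
    · intro hx
      rcases Finset.mem_insert.mp hx with h' | h'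
      · exact hne h'.symm
      · exact hvμ h'

lemma contig_id_fixes (hmin : MinimalCplx K) {φ : V → V}
    (hc : ContigClass K K φ id) : ∀ v, IsVertex K v → φ v = v := by
  induction hc using Relation.ReflTransGen.head_induction_on with
  | refl => intro v _; rfl
  | @head x y h1 _ ih =>
    intro v hv
    by_contra hne
    have hu : ∀ σ ∈ K.faces, σ ∪ σ.image x ∈ K.faces := by
      intro σ hσ
      have h2 := h1 σ hσ
      have h3 : σ.image y = σ := by
        rw [Finset.image_congr (g := id) (fun t ht => ih t (vertex_of_mem hσ ht)),
          Finset.image_id]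
      rwa [h3, Finset.union_comm] at h2
    exact (hmin v) (dominated_of_union hu hv hne)

/-! #### Strong equivalences: basic facts -/

lemma Contiguous.precomp {f g : V → V} (h : Contiguous K L f g)
    {e : V → V} (he : IsSimplicial J K e) : Contiguous J L (f ∘ e) (g ∘ e) := by
  intro σ hσ
  have := h (σ.image e) (he σ hσ)
  simpa [Finset.image_image] using this

lemma Contiguous.postcomp {f g : V → V} (h : Contiguous K L f g)
    {m : V → V} (hm : IsSimplicial L M m) : Contiguous K M (m ∘ f) (m ∘ g) := by
  intro σ hσ
  have := hm _ (h σ hσ)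
  simpa [Finset.image_union, Finset.image_image] using this

lemma ContigClass.precomp {f g : V → V} (h : ContigClass K L f g)
    {e : V → V} (he : IsSimplicial J K e) : ContigClass J L (f ∘ e) (g ∘ e) :=
  Relation.ReflTransGen.lift (r := Contiguous K L) (p := Contiguous J L) (· ∘ e)
    (fun _ _ hc => hc.precomp he) _ _ h

lemma ContigClass.postcomp {f g : V → V} (h : ContigClass K L f g)
    {m : V → V} (hm : IsSimplicial L M m) : ContigClass K M (m ∘ f) (m ∘ g) :=
  Relation.ReflTransGen.lift (r := Contiguous K L) (p := Contiguous K M) (m ∘ ·)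
    (fun _ _ hc => hc.postcomp hm) _ _ h

lemma isSimplicial_id : IsSimplicial K K id := by
  intro σ hσ
  rwa [Finset.image_id]

lemma strongEquiv_id : StrongEquiv K K id := by
  refine ⟨isSimplicial_id, id, isSimplicial_id, ?_, ?_⟩ <;>
    · rw [Function.comp_id]
      exact Relation.ReflTransGen.refl

lemma StrongEquiv.symm' {f : V → V} (h : StrongEquiv K L f) :
    ∃ g, StrongEquiv L K g := by
  obtain ⟨hf, g, hg, c1, c2⟩ := h
  exact ⟨g, hg, f, hf, c2, c1⟩

lemma StrongEquiv.trans {f1 f2 : V → V} (h1 : StrongEquiv K L f1)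
    (h2 : StrongEquiv L M f2) : StrongEquiv K M (f2 ∘ f1) := by
  obtain ⟨hf1, g1, hg1, c1, d1⟩ := h1
  obtain ⟨hf2, g2, hg2, c2, d2⟩ := h2
  refine ⟨?_, g1 ∘ g2, ?_, ?_, ?_⟩
  · intro σ hσ
    have := hf2 _ (hf1 σ hσ)
    simpa [Finset.image_image] using this
  · intro σ hσ
    have := hg1 _ (hg2 σ hσ)
    simpa [Finset.image_image] using this
  · have h3 : ContigClass K K (g1 ∘ ((g2 ∘ f2) ∘ f1)) (g1 ∘ (id ∘ f1)) :=
      (c2.precomp hf1).postcomp hg1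
    exact Relation.ReflTransGen.trans h3 c1
  · have h3 : ContigClass M M (f2 ∘ ((f1 ∘ g1) ∘ g2)) (f2 ∘ (id ∘ g2)) :=
      (d1.precomp hg2).postcomp hf2
    exact Relation.ReflTransGen.trans h3 d2

end Proof15

section Proof15b

variable {K L : Cplx V}

/-- The retraction sending the dominated vertex `v` to the apex `a`. -/
noncomputable def retr (v a : V) : V → V := fun w => if w = v then a else w

lemma apex_ne {v a : V} (hva : DominatedBy K v a) : a ≠ v := by
  obtain ⟨ha, -⟩ := hva
  obtain ⟨-, hv, -⟩ := mem_link.mp ha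
  intro h
  exact hv (by simp [h])

lemma insert_apex {v a : V} (hva : DominatedBy K v a) {σ : Finset V}
    (hσ : σ ∈ K.faces) (hvσ : v ∈ σ) : insert a σ ∈ K.faces := by
  obtain ⟨ha1, ha2⟩ := hva
  by_cases hE : σ.erase v = ∅
  · have hσv : σ = {v} := by
      rcases (Finset.erase_eq_empty_iff σ v).mp hE with h | h
      · exact absurd h (Finset.nonempty_iff_ne_empty.mp (K.nonempty_of_mem hσ))
      · exact h
    obtain ⟨-, -, hins⟩ := mem_link.mp ha1
    rw [hσv]
    have : insert a ({v} : Finset V) = insert v {a} := Finset.pair_comm a v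
    rwa [this]
  · have hne : (σ.erase v).Nonempty := Finset.nonempty_iff_ne_empty.mpr hE
    have hμ : σ.erase v ∈ link K v := by
      refine mem_link.mpr ⟨K.down_closed hσ (Finset.erase_subset _ _) hne,
        Finset.notMem_erase _ _, ?_⟩
      rwa [Finset.insert_erase hvσ]
    have h2 := ha2 _ hμ
    obtain ⟨-, -, hins⟩ := mem_link.mp h2
    have : insert v (insert a (σ.erase v)) = insert a σ := by
      rw [Finset.insert_comm, Finset.insert_erase hvσ]
    rwa [this] at hins

lemma image_retr_subset {v a : V} (σ : Finset V) :
    σ.image (retr v a) ⊆ insert a σ := by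
  intro x hx
  obtain ⟨w, hw, rfl⟩ := Finset.mem_image.mp hx
  unfold retr
  by_cases h : w = v
  · simp [h]
  · simp only [if_neg h]
    exact Finset.mem_insert_of_mem hw

lemma image_retr_of_not_mem {v a : V} {σ : Finset V} (h : v ∉ σ) :
    σ.image (retr v a) = σ := by
  rw [Finset.image_congr (g := id), Finset.image_id]
  intro w hw
  have : w ≠ v := fun hwv => h (hwv ▸ hw)
  simp [retr, this]

lemma not_mem_image_retr {v a : V} (hav : a ≠ v) (σ : Finset V) :
    v ∉ σ.image (retr v a) := by
  intro hx
  obtain ⟨w, hw, hwv⟩ := Finset.mem_image.mp hx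
  unfold retr at hwv
  by_cases h : w = v
  · rw [if_pos h] at hwv; exact hav hwv
  · rw [if_neg h] at hwv; exact h hwv

lemma retr_simplicial {v a : V} (hva : DominatedBy K v a) :
    IsSimplicial K (delete K v) (retr v a) := by
  intro σ hσ
  have hav := apex_ne hva
  refine Finset.mem_filter.mpr ⟨?_, not_mem_image_retr hav σ⟩
  by_cases hvσ : v ∈ σ
  · exact K.down_closed (insert_apex hva hσ hvσ) (image_retr_subset σ)
      ((K.nonempty_of_mem hσ).image _)
  · rwa [image_retr_of_not_mem hvσ]

lemma delete_subcplx {v : V} : ∀ σ ∈ (delete K v).faces, σ ∈ K.faces :=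
  fun _ hσ => (Finset.mem_filter.mp hσ).1

lemma strongEquiv_delete {v a : V} (hva : DominatedBy K v a) :
    StrongEquiv K (delete K v) (retr v a) := by
  refine ⟨retr_simplicial hva, id, ?_, ?_, ?_⟩
  · intro σ hσ
    rw [Finset.image_id]
    exact delete_subcplx σ hσ
  · rw [Function.id_comp]
    refine Relation.ReflTransGen.single ?_
    intro σ hσ
    rw [Finset.image_id]
    by_cases hvσ : v ∈ σ
    · refine K.down_closed (insert_apex hva hσ hvσ) ?_ ?_
      · exact Finset.union_subset (image_retr_subset σ) (Finset.subset_insert _ _)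
      · exact ⟨v, Finset.mem_union_right _ hvσ⟩
    · rw [image_retr_of_not_mem hvσ, Finset.union_self]
      exact hσ
  · rw [Function.comp_id]
    refine Relation.ReflTransGen.single ?_
    intro σ hσ
    have hvσ : v ∉ σ := (Finset.mem_filter.mp hσ).2
    rw [Finset.image_id, image_retr_of_not_mem hvσ, Finset.union_self]
    exact hσ

lemma vertex_of_dominated {v : V} (h : Dominated K v) : IsVertex K v := by
  obtain ⟨a, ha, -⟩ := h
  obtain ⟨-, -, hins⟩ := mem_link.mp ha
  exact K.down_closed hins
    (Finset.singleton_subset_iff.mpr (Finset.mem_insert_self _ _))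
    (Finset.singleton_nonempty v)

lemma exists_core (K : Cplx V) :
    ∃ K₀ : Cplx V, MinimalCplx K₀ ∧ StrongCollapses K K₀ := by
  suffices H : ∀ (n : ℕ) (K : Cplx V), K.faces.card = n →
      ∃ K₀ : Cplx V, MinimalCplx K₀ ∧ StrongCollapses K K₀ from H _ K rfl
  intro n
  induction n using Nat.strong_induction_on with
  | _ n ih =>
    intro K hn
    by_cases hmin : MinimalCplx K
    · exact ⟨K, hmin, Relation.ReflTransGen.refl⟩
    · simp only [MinimalCplx, not_forall, not_not] at hmin
      obtain ⟨v, hv⟩ := hmin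
      have hlt : (delete K v).faces.card < n := by
        subst hn
        apply Finset.card_lt_card
        refine (Finset.ssubset_iff_of_subset (Finset.filter_subset _ _)).mpr
          ⟨{v}, vertex_of_dominated hv, ?_⟩
        simp [delete]
      obtain ⟨K₀, h1, h2⟩ := ih _ hlt (delete K v) rfl
      exact ⟨K₀, h1, Relation.ReflTransGen.head ⟨v, hv, rfl⟩ h2⟩

lemma strongEquiv_of_collapses (h : StrongCollapses K L) :
    ∃ φ, StrongEquiv K L φ := by
  induction h with
  | refl => exact ⟨id, strongEquiv_id⟩
  | tail _ hbc ih =>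
    obtain ⟨φ, hφ⟩ := ih
    obtain ⟨v, hv, rfl⟩ := hbc
    obtain ⟨a, ha⟩ := hv
    exact ⟨retr v a ∘ φ, hφ.trans (strongEquiv_delete ha)⟩

lemma iso_of_min (hK : MinimalCplx K) (hL : MinimalCplx L) {φ : V → V}
    (hse : StrongEquiv K L φ) : Isomorphic K L := by
  obtain ⟨hφ, ψ, hψ, c1, c2⟩ := hse
  have e1 : ∀ v, IsVertex K v → ψ (φ v) = v := contig_id_fixes hK c1
  have e2 : ∀ w, IsVertex L w → φ (ψ w) = w := contig_id_fixes hL c2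
  refine ⟨φ, hφ, ?_, ?_⟩
  · intro a ha b hb hab
    calc a = ψ (φ a) := (e1 a ha).symm
    _ = ψ (φ b) := by rw [hab]
    _ = b := e1 b hb
  · apply Finset.Subset.antisymm
    · intro τ hτ
      obtain ⟨σ, hσ, rfl⟩ := Finset.mem_image.mp hτ
      exact hφ σ hσ
    · intro τ hτ
      refine Finset.mem_image.mpr ⟨τ.image ψ, hψ τ hτ, ?_⟩
      rw [Finset.image_image,
        Finset.image_congr (f := φ ∘ ψ) (g := id)
          (fun t ht => e2 t (vertex_of_mem hτ ht)),
        Finset.image_id]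

lemma rtg_flip {α : Type*} {r : α → α → Prop} {a b : α}
    (h : Relation.ReflTransGen r a b) :
    Relation.ReflTransGen (fun x y => r y x) b a := by
  induction h with
  | refl => exact Relation.ReflTransGen.refl
  | tail _ hbc ih => exact Relation.ReflTransGen.head hbc ih

lemma sameSHT_of_collapses (h : StrongCollapses K L) : SameSHT K L :=
  Relation.ReflTransGen.mono (r := ElemStrongCollapse) (fun _ _ hc => Or.inl hc) _ _ h

lemma sameSHT_expand (h : StrongCollapses L K) : SameSHT K L :=
  Relation.ReflTransGen.mono (r := fun x y => ElemStrongCollapse y x)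
    (fun _ _ hc => Or.inr (Or.inl hc)) _ _ (rtg_flip h)

lemma cplx_eq {K L : Cplx V} (h : K.faces = L.faces) : K = L := by
  cases K
  cases L
  simp only at h
  subst h
  rfl

end Proof15b

/-- if the face posets of `K` and `L` are homotopy equivalent
finite posets, then `K` and `L` have the same strong homotopy type. -/
theorem stmt15 {V : Type} (K L : Cplx V)
    (h : PosetHomotopyEquiv {σ : Finset V // σ ∈ K.faces}
      {τ : Finset V // τ ∈ L.faces}) :
    SameSHT K L := by
  classical
  obtain ⟨f, g, h1, h2⟩ := h
  by_cases hK : K.faces = ∅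
  · have hL : L.faces = ∅ := by
      by_contra hL
      obtain ⟨τ, hτ⟩ := Finset.nonempty_iff_ne_empty.mpr hL
      have := (g ⟨τ, hτ⟩).prop
      exact absurd this (by simp [hK])
    have hKL : K = L := cplx_eq (hK.trans hL.symm)
    rw [hKL]
    exact Relation.ReflTransGen.refl
  · have hKne : K.faces.Nonempty := Finset.nonempty_iff_ne_empty.mpr hK
    obtain ⟨σ₀, hσ₀⟩ := hKne
    have hLne : L.faces.Nonempty := ⟨_, (f ⟨σ₀, hσ₀⟩).prop⟩
    obtain ⟨v₀, -⟩ := K.nonempty_of_mem hσ₀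
    haveI : Nonempty V := ⟨v₀⟩
    obtain ⟨φ, hφ⟩ := exists_choice (K := K) (L := L) f
    obtain ⟨ψ, hψ⟩ := exists_choice (K := L) (L := K) g
    have SE : StrongEquiv K L φ :=
      ⟨hφ.isSimplicial, ψ, hψ.isSimplicial,
        contigClass_of_homotopic h1 (hφ.comp hψ) isChoice_id,
        contigClass_of_homotopic h2 (hψ.comp hφ) isChoice_id⟩
    obtain ⟨K₀, hK₀min, hK₀c⟩ := exists_core K
    obtain ⟨L₀, hL₀min, hL₀c⟩ := exists_core L
    obtain ⟨cK, hcK⟩ := strongEquiv_of_collapses hK₀c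
    obtain ⟨cL, hcL⟩ := strongEquiv_of_collapses hL₀c
    obtain ⟨dK, hdK⟩ := hcK.symm'
    have SE0 : StrongEquiv K₀ L₀ (cL ∘ (φ ∘ dK)) := (hdK.trans SE).trans hcL
    have hiso : Isomorphic K₀ L₀ := iso_of_min hK₀min hL₀min SE0
    have hstep : SameSHT K₀ L₀ :=
      Relation.ReflTransGen.single (Or.inr (Or.inr hiso))
    exact (sameSHT_of_collapses hK₀c).trans
      (hstep.trans (sameSHT_expand hL₀c))

end StrongHomotopy
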